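/- Every partial plane spread S in PG(6,2) of size 17 contains a 5-configuration: there exist a 5-element subset T ⊆ S and two distinct hyperplanes H₁ ≠ H₂ of V = F₂⁷ such that H₁ contains exactly 3 elements of T and H₂ contains exactly 3 elements of T. -/

import Mathlib

open Module

abbrev V2 : Type := Fin 7 → ZMod 2

/-- A partial plane spread in PG(6,2): a set of 3-dimensional subspaces of `V2 = F₂⁷`
(the blocks) any two distinct members of which intersect trivially. -/
def IsPPS (S : Set (Submodule (ZMod 2) V2)) : Prop :=
  (∀ B ∈ S, finrank (ZMod 2) ↥B = 3) ∧
    ∀ B₁ ∈ S, ∀ B₂ ∈ S, B₁ ≠ B₂ → B₁ ⊓ B₂ = ⊥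

/-- A point (1-dimensional subspace) of `V2` is a hole of `S` if it is contained
in no block of `S`. -/
def IsHole (S : Set (Submodule (ZMod 2) V2)) (P : Submodule (ZMod 2) V2) : Prop :=
  finrank (ZMod 2) ↥P = 1 ∧ ∀ B ∈ S, ¬ P ≤ B

/-- The number of holes of `S` contained in the subspace `X`. -/
noncomputable def holeCount (S : Set (Submodule (ZMod 2) V2))
    (X : Submodule (ZMod 2) V2) : ℕ :=
  {P | IsHole S P ∧ P ≤ X}.ncard

/-- The span `⟨N⟩` of the set of holes of `S`. -/
noncomputable def holeSpan (S : Set (Submodule (ZMod 2) V2)) : Submodule (ZMod 2) V2 :=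
  sSup {P | IsHole S P}

/-- The number of blocks of `S` contained in the subspace `H`. -/
noncomputable def blocksIn (S : Set (Submodule (ZMod 2) V2))
    (H : Submodule (ZMod 2) V2) : ℕ :=
  {B ∈ S | B ≤ H}.ncard

/-- `spec S i` = the number of hyperplanes of `V2` containing exactly `i` blocks of `S`. -/
noncomputable def spec (S : Set (Submodule (ZMod 2) V2)) (i : ℕ) : ℕ :=
  {H : Submodule (ZMod 2) V2 | finrank (ZMod 2) ↥H = 6 ∧ blocksIn S H = i}.ncard

/-!
Two distinct blocks span a hyperplane. A block meets a hyperplane `H` in at least `3`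
nonzero vectors, and in `7` if it lies in `H`; these sets are disjoint inside the `63`
nonzero vectors of `H`, so `H` contains at most three of the `17` blocks. For a block `B`,
the map `C ↦ B ⊔ C` sends the other `16` blocks into the `15` hyperplanes through `B`, so
`B` lies in a hyperplane containing exactly three blocks. These hyperplanes cannot partition
the blocks since `3 ∤ 17`, so some block `B` lies in two of them, `H₁ ≠ H₂`. No other block
fits into the `5`-space `H₁ ⊓ H₂`, so the blocks in `H₁` or `H₂` are five and form the
configuration.
-/

instance Submodule.finite_of_finite {R M : Type*} [Semiring R] [AddCommMonoid M] [Module R M]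
    [Finite M] : Finite (Submodule R M) :=
  Finite.of_injective _ SetLike.coe_injective

section Hyperplanes

variable {K M : Type*} [Field K] [AddCommGroup M] [Module K M] [FiniteDimensional K M]

lemma exists_dual_ker_eq_of_finrank_add_one {H : Submodule K M}
    (hH : finrank K H + 1 = finrank K M) : ∃ f : Dual K M, LinearMap.ker f = H := by
  have hq : finrank K (M ⧸ H) = finrank K K := by
    have := H.finrank_quotient_add_finrank
    rw [finrank_self]; omega
  obtain ⟨e⟩ := FiniteDimensional.nonempty_linearEquiv_of_finrank_eq hq
  refine ⟨e.toLinearMap ∘ₗ H.mkQ, ?_⟩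
  rw [LinearMap.ker_comp, LinearEquiv.ker, Submodule.comap_bot, Submodule.ker_mkQ]

/-- Every hyperplane through `W` is the kernel of a nonzero functional annihilating `W`. -/
lemma ncard_hyperplanes_containing_le [Finite K] (W : Submodule K M) :
    {H : Submodule K M | finrank K H + 1 = finrank K M ∧ W ≤ H}.ncard
      ≤ Nat.card K ^ (finrank K M - finrank K W) - 1 := by
  have hsub : {H : Submodule K M | finrank K H + 1 = finrank K M ∧ W ≤ H}
      ⊆ LinearMap.ker '' ((W.dualAnnihilator : Set (Dual K M)) \ {0}) := by
    rintro H ⟨hH, hWH⟩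
    obtain ⟨f, rfl⟩ := exists_dual_ker_eq_of_finrank_add_one hH
    refine ⟨f, ⟨(Submodule.mem_dualAnnihilator f).2 fun w hw => hWH hw, ?_⟩, rfl⟩
    rintro rfl
    rw [LinearMap.ker_zero, finrank_top] at hH
    omega
  have : Finite (Dual K M) := Module.finite_of_finite K
  have hann : (W.dualAnnihilator : Set (Dual K M)).ncard
      = Nat.card K ^ (finrank K M - finrank K W) := by
    have := Subspace.finrank_add_finrank_dualAnnihilator_eq W
    rw [← Nat.card_coe_set_eq, SetLike.coe_sort_coe, Module.natCard_eq_pow_finrank (K := K)]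
    congr 1
    omega
  calc _ ≤ (LinearMap.ker '' ((W.dualAnnihilator : Set (Dual K M)) \ {0})).ncard :=
        Set.ncard_le_ncard hsub (Set.toFinite _)
    _ ≤ ((W.dualAnnihilator : Set (Dual K M)) \ {0}).ncard := Set.ncard_image_le (Set.toFinite _)
    _ = _ := by
      rw [Set.ncard_sdiff_singleton_of_mem (W.dualAnnihilator.zero_mem), hann]

end Hyperplanes

open Finset

section

variable {R M : Type*} [Ring R] [AddCommGroup M] [Module R M] [Finite M]

lemma sum_card_inf_sub_one_le {s : Finset (Submodule R M)}
    (hs : (s : Set (Submodule R M)).Pairwise fun B C => B ⊓ C = ⊥) (X : Submodule R M) :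
    ∑ B ∈ s, (Nat.card ↥(B ⊓ X) - 1) ≤ Nat.card X - 1 := by
  classical
  have := Fintype.ofFinite M
  let N : Submodule R M → Finset M := fun P => ((P : Set M) \ {0}).toFinset
  have hN (P : Submodule R M) : #(N P) = Nat.card P - 1 := by
    rw [← Set.ncard_eq_toFinset_card', Set.ncard_sdiff_singleton_of_mem P.zero_mem,
      ← Nat.card_coe_set_eq, SetLike.coe_sort_coe]
  have hdisj : (s : Set (Submodule R M)).PairwiseDisjoint fun B => N (B ⊓ X) := by
    intro B hB C hC hBC
    simp only [Function.onFun, N, Set.disjoint_toFinset, Set.disjoint_left]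
    rintro v ⟨⟨hvB, -⟩, hv0⟩ ⟨⟨hvC, -⟩, -⟩
    have hv : v ∈ B ⊓ C := ⟨hvB, hvC⟩
    rw [hs hB hC hBC] at hv
    exact hv0 hv
  calc ∑ B ∈ s, (Nat.card ↥(B ⊓ X) - 1) = #(s.biUnion fun B => N (B ⊓ X)) := by
        rw [card_biUnion hdisj]
        simp only [hN]
    _ ≤ #(N X) := card_le_card fun v hv => by
        obtain ⟨B, -, hv⟩ := mem_biUnion.1 hv
        simp only [N, Set.mem_toFinset] at hv ⊢
        exact ⟨hv.1.2, hv.2⟩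
    _ = Nat.card X - 1 := hN X

end

open scoped Classical

lemma finrank_V2 : finrank (ZMod 2) V2 = 7 := by
  simp

lemma blocksIn_coe (s : Finset (Submodule (ZMod 2) V2)) (H : Submodule (ZMod 2) V2) :
    blocksIn s H = #{B ∈ s | B ≤ H} := by
  rw [blocksIn, ← Set.ncard_coe_finset, coe_filter]
  rfl

namespace IsPPS

variable {S : Set (Submodule (ZMod 2) V2)}

lemma finrank_sup (hS : IsPPS S) {B C : Submodule (ZMod 2) V2} (hB : B ∈ S) (hC : C ∈ S)
    (hBC : B ≠ C) : finrank (ZMod 2) ↥(B ⊔ C) = 6 := by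
  have := Submodule.finrank_sup_add_finrank_inf_eq B C
  rw [hS.1 B hB, hS.1 C hC, hS.2 B hB C hC hBC, finrank_bot] at this
  omega

lemma eq_of_le_of_finrank_lt (hS : IsPPS S) {B C W : Submodule (ZMod 2) V2} (hB : B ∈ S)
    (hC : C ∈ S) (hW : finrank (ZMod 2) W < 6) (hBW : B ≤ W) (hCW : C ≤ W) : B = C := by
  by_contra hBC
  have := Submodule.finrank_mono (sup_le hBW hCW)
  rw [hS.finrank_sup hB hC hBC] at this
  omega

lemma two_le_finrank_inf (hS : IsPPS S) {B H : Submodule (ZMod 2) V2} (hB : B ∈ S)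
    (hH : finrank (ZMod 2) H = 6) : 2 ≤ finrank (ZMod 2) ↥(B ⊓ H) := by
  have hdim := Submodule.finrank_sup_add_finrank_inf_eq B H
  have hsup := Submodule.finrank_le (B ⊔ H)
  rw [hS.1 B hB, hH] at hdim
  rw [finrank_V2] at hsup
  omega

section

variable {s : Finset (Submodule (ZMod 2) V2)}

lemma card_add_blocksIn_le (hS : IsPPS ↑s) {H : Submodule (ZMod 2) V2}
    (hH : finrank (ZMod 2) H = 6) : 3 * #s + 4 * blocksIn s H ≤ 63 := by
  have hpair : (s : Set (Submodule (ZMod 2) V2)).Pairwise fun B C => B ⊓ C = ⊥ :=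
    fun B hB C hC hBC => hS.2 B hB C hC hBC
  calc 3 * #s + 4 * blocksIn s H = ∑ B ∈ s, (3 + 4 * if B ≤ H then 1 else 0) := by
        rw [blocksIn_coe, sum_add_distrib, ← mul_sum, sum_boole]
        simp [mul_comm]
    _ ≤ ∑ B ∈ s, (Nat.card ↥(B ⊓ H) - 1) := sum_le_sum fun B hB => by
        rw [natCard_eq_pow_finrank (K := ZMod 2), Nat.card_zmod]
        split_ifs with hBH
        · rw [inf_eq_left.2 hBH, hS.1 B hB]
          rfl
        · have := Nat.pow_le_pow_right two_pos (hS.two_le_finrank_inf hB hH)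
          omega
    _ ≤ Nat.card H - 1 := sum_card_inf_sub_one_le hpair H
    _ = 63 := by rw [natCard_eq_pow_finrank (K := ZMod 2), Nat.card_zmod, hH]; rfl

lemma exists_hyperplane_three_le_blocksIn (hS : IsPPS ↑s) (hs : 16 < #s)
    {B : Submodule (ZMod 2) V2} (hB : B ∈ s) :
    ∃ H : Submodule (ZMod 2) V2, finrank (ZMod 2) H = 6 ∧ B ≤ H ∧ 3 ≤ blocksIn s H := by
  have hlt : {H : Submodule (ZMod 2) V2 |
      finrank (ZMod 2) H + 1 = finrank (ZMod 2) V2 ∧ B ≤ H}.ncard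
        < (s.erase B : Set (Submodule (ZMod 2) V2)).ncard := by
    have := ncard_hyperplanes_containing_le B
    rw [finrank_V2, Nat.card_zmod, hS.1 B hB] at this
    rw [Set.ncard_coe_finset, card_erase_of_mem hB, finrank_V2]
    omega
  have hsup : ∀ C ∈ (s.erase B : Set (Submodule (ZMod 2) V2)), finrank (ZMod 2) ↥(B ⊔ C) = 6 :=
    fun C hC => hS.finrank_sup hB (mem_of_mem_erase hC) (ne_of_mem_erase hC).symm
  obtain ⟨C, hC, C', hC', hCC', hsupeq⟩ := Set.exists_ne_map_eq_of_ncard_lt_of_maps_to hlt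
    (f := (B ⊔ ·)) fun C hC => ⟨by rw [hsup C hC, finrank_V2], le_sup_left⟩
  refine ⟨B ⊔ C, hsup C hC, le_sup_left, ?_⟩
  rw [blocksIn_coe]
  refine two_lt_card.2 ⟨B, ?_, C, ?_, C', ?_, (ne_of_mem_erase hC).symm,
    (ne_of_mem_erase hC').symm, hCC'⟩ <;> simp only [mem_filter]
  · exact ⟨hB, le_sup_left⟩
  · exact ⟨mem_of_mem_erase hC, le_sup_right⟩
  · exact ⟨mem_of_mem_erase hC', hsupeq ▸ le_sup_right⟩

lemma exists_mem_two_hyperplanes_blocksIn_eq_three (hS : IsPPS ↑s) (hs : #s = 17) :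
    ∃ B ∈ s, ∃ H₁ H₂ : Submodule (ZMod 2) V2, finrank (ZMod 2) H₁ = 6 ∧
      finrank (ZMod 2) H₂ = 6 ∧ H₁ ≠ H₂ ∧ B ≤ H₁ ∧ B ≤ H₂ ∧
      blocksIn s H₁ = 3 ∧ blocksIn s H₂ = 3 := by
  let A := (Set.toFinite {H : Submodule (ZMod 2) V2 |
    finrank (ZMod 2) H = 6 ∧ blocksIn s H = 3}).toFinset
  let r : Submodule (ZMod 2) V2 → Submodule (ZMod 2) V2 → Prop := fun H B => B ≤ H
  suffices ∃ B ∈ s, 1 < #(A.bipartiteBelow r B) by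
    obtain ⟨B, hB, hA⟩ := this
    obtain ⟨H₁, hH₁, H₂, hH₂, hne⟩ := one_lt_card.1 hA
    simp only [A, r, mem_bipartiteBelow, Set.Finite.mem_toFinset, Set.mem_ofPred_eq] at hH₁ hH₂
    exact ⟨B, hB, H₁, H₂, hH₁.1.1, hH₂.1.1, hne, hH₁.2, hH₂.2, hH₁.1.2, hH₂.1.2⟩
  by_contra! hle
  have hone : ∀ B ∈ s, #(A.bipartiteBelow r B) = 1 := by
    intro B hB
    obtain ⟨H, hH, hBH, h3⟩ := exists_hyperplane_three_le_blocksIn hS (by omega) hB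
    have hHA : H ∈ A.bipartiteBelow r B := by
      have := card_add_blocksIn_le hS hH
      simp only [A, r, mem_bipartiteBelow, Set.Finite.mem_toFinset, Set.mem_ofPred_eq]
      exact ⟨⟨hH, by omega⟩, hBH⟩
    exact le_antisymm (hle B hB) (card_pos.2 ⟨H, hHA⟩)
  have hthree : ∀ H ∈ A, #(s.bipartiteAbove r H) = 3 := by
    intro H hH
    simp only [A, Set.Finite.mem_toFinset, Set.mem_ofPred_eq] at hH
    rw [← hH.2, blocksIn_coe]
    rfl
  have := sum_card_bipartiteAbove_eq_sum_card_bipartiteBelow r (s := A) (t := s)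
  rw [sum_congr rfl hthree, sum_congr rfl hone, sum_const, sum_const, hs] at this
  simp only [smul_eq_mul] at this
  omega

end

lemma exists_five_configuration (hS : IsPPS S) {B H₁ H₂ : Submodule (ZMod 2) V2} (hB : B ∈ S)
    (h₁ : finrank (ZMod 2) H₁ = 6) (h₂ : finrank (ZMod 2) H₂ = 6) (hne : H₁ ≠ H₂)
    (hB₁ : B ≤ H₁) (hB₂ : B ≤ H₂) (c₁ : blocksIn S H₁ = 3) (c₂ : blocksIn S H₂ = 3) :
    ∃ T ⊆ S, T.ncard = 5 ∧ blocksIn T H₁ = 3 ∧ blocksIn T H₂ = 3 := by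
  have hlt : finrank (ZMod 2) ↥(H₁ ⊓ H₂) < 6 := h₁ ▸ Submodule.finrank_lt_finrank_of_lt
    (inf_le_left.lt_of_ne fun h =>
      hne (Submodule.eq_of_le_of_finrank_eq (inf_eq_left.1 h) (h₁.trans h₂.symm)))
  have hinter : {X ∈ S | X ≤ H₁} ∩ {X ∈ S | X ≤ H₂} = {B} := by
    ext X
    constructor
    · rintro ⟨⟨hX, hX₁⟩, -, hX₂⟩
      exact hS.eq_of_le_of_finrank_lt hX hB hlt (le_inf hX₁ hX₂) (le_inf hB₁ hB₂)
    · rintro rfl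
      exact ⟨⟨hB, hB₁⟩, hB, hB₂⟩
  refine ⟨{X ∈ S | X ≤ H₁} ∪ {X ∈ S | X ≤ H₂},
    Set.union_subset (Set.sep_subset _ _) (Set.sep_subset _ _), ?_, ?_, ?_⟩
  · unfold blocksIn at c₁ c₂
    have := Set.ncard_union_add_ncard_inter {X ∈ S | X ≤ H₁} {X ∈ S | X ≤ H₂}
      (Set.finite_of_ncard_pos (by omega)) (Set.finite_of_ncard_pos (by omega))
    rw [hinter, Set.ncard_singleton] at this
    omega
  · rw [← c₁, blocksIn, blocksIn]
    congr 1
    ext X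
    simp only [Set.mem_ofPred_eq, Set.mem_union]
    tauto
  · rw [← c₂, blocksIn, blocksIn]
    congr 1
    ext X
    simp only [Set.mem_ofPred_eq, Set.mem_union]
    tauto

end IsPPS

theorem max_pps_contains_five_configuration (S : Set (Submodule (ZMod 2) V2))
    (hS : IsPPS S) (h17 : S.ncard = 17) :
    ∃ T ⊆ S, T.ncard = 5 ∧
      ∃ H₁ H₂ : Submodule (ZMod 2) V2,
        finrank (ZMod 2) ↥H₁ = 6 ∧ finrank (ZMod 2) ↥H₂ = 6 ∧ H₁ ≠ H₂ ∧
        blocksIn T H₁ = 3 ∧ blocksIn T H₂ = 3 := by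
  obtain ⟨s, rfl⟩ := (Set.finite_of_ncard_pos (by omega : 0 < S.ncard)).exists_finset_coe
  rw [Set.ncard_coe_finset] at h17
  obtain ⟨B, hB, H₁, H₂, h₁, h₂, hne, hB₁, hB₂, c₁, c₂⟩ :=
    hS.exists_mem_two_hyperplanes_blocksIn_eq_three h17
  obtain ⟨T, hTS, hT, hT₁, hT₂⟩ := hS.exists_five_configuration hB h₁ h₂ hne hB₁ hB₂ c₁ c₂
  exact ⟨T, hTS, hT, H₁, H₂, h₁, h₂, hne, hT₁, hT₂⟩
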